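/- arXiv:2404.12155 — 2 statements merged into one kernel-verified Lean document; each statement's English description precedes it below -/
import Mathlib

section
/- Under the ADDA setup, for every k ≥ 0 the iterates Y_k satisfy, in the Loewner order: 0 ≤ Y_k ≤ Y_{k+1} ≤ Y, and moreover 0 ≤ Y − Y_k ≤ (I + Y X)·𝒞(R;α)^{2^k}·Y·𝒞(S;α)^{2^k}. -/
/-!
With `M = 𝒞(R;α)^(2^k)` and `N = 𝒞(S;α)^(2^k)`, the iterates satisfy the four identities
`Â_k = (I + Y_k X) M`, `Â_kᵀ = (I + X_k Y) N`, `X - X_k = Â_kᵀ X M`, `Y - Y_k = Â_k Y N`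
(`ADDA.DoublingRelation`). For `k = 0` they are the CARE and its dual seen through the Cayley
transforms; one ADDA step squares `M` and `N` and preserves them. The relation is symmetric under
`X ↔ Y`, `Â ↔ Âᵀ`, so each computation is only done once.

Positivity comes from `P (I + N P)⁻¹ ⪰ 0` for `P, N ⪰ 0` (write `P = Bᴴ B` and push `B` through
the inverse). It gives `X_k, Y_k ⪰ 0` and `Y_{k+1} - Y_k ⪰ 0`; with `N = (I + X_k Y)⁻¹ Â_kᵀ` it
gives `Y - Y_k = Â_k Y (I + X_k Y)⁻¹ Â_kᵀ ⪰ 0`; and with `M = (I + Y_k X)⁻¹ Â_k` the error bound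
minus `Y - Y_k` is `(Y - Y_k) X (I + Y_k X)⁻¹ (Y - Y_k) ⪰ 0`.
-/

open Matrix
open scoped Matrix.Norms.L2Operator MatrixOrder ComplexOrder

namespace Matrix

section CommRing
variable {m n R : Type*} [Fintype m] [Fintype n] [DecidableEq m] [DecidableEq n] [CommRing R]

theorem isUnit_one_add_mul_comm (A : Matrix m n R) (B : Matrix n m R) :
    IsUnit (1 + A * B) ↔ IsUnit (1 + B * A) := by
  rw [isUnit_iff_isUnit_det, isUnit_iff_isUnit_det, det_one_add_mul_comm]

-- No invertibility is needed: if `1 + B * A` is singular then so is `1 + A * B`, and `⁻¹` is `0`.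
theorem inv_one_add_mul_mul (A : Matrix m n R) (B : Matrix n m R) :
    (1 + A * B)⁻¹ * A = A * (1 + B * A)⁻¹ := by
  by_cases h : IsUnit (1 + B * A)
  · let := ((isUnit_one_add_mul_comm A B).2 h).invertible
    let := h.invertible
    have h_comm : (1 + A * B) * A = A * (1 + B * A) := by
      rw [Matrix.add_mul, Matrix.mul_add, Matrix.one_mul, Matrix.mul_one, Matrix.mul_assoc]
    rw [inv_mul_eq_iff_eq_mul_of_invertible, ← Matrix.mul_assoc, h_comm,
      mul_inv_cancel_right_of_invertible]
  · have h' : ¬IsUnit (1 + A * B) := by rwa [isUnit_one_add_mul_comm]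
    rw [isUnit_iff_isUnit_det] at h h'
    rw [nonsing_inv_apply_not_isUnit _ h, nonsing_inv_apply_not_isUnit _ h', Matrix.zero_mul,
      Matrix.mul_zero]

theorem add_mul_inv_transpose_mul_eq {A G Q : Matrix n n R} (hA : IsUnit A) :
    A + G * Aᵀ⁻¹ * Q = (1 + G * (Aᵀ⁻¹ * Q * A⁻¹)) * A := by
  rw [Matrix.add_mul, Matrix.one_mul, Matrix.mul_assoc G, Matrix.mul_assoc G,
    nonsing_inv_mul_cancel_right _ _ ((isUnit_iff_isUnit_det _).1 hA)]

end CommRing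

section RCLike
variable {n 𝕜 : Type*} [Fintype n] [DecidableEq n] [RCLike 𝕜]

theorem PosSemidef.isUnit_one_add_mul {P N : Matrix n n 𝕜} (hP : P.PosSemidef)
    (hN : N.PosSemidef) : IsUnit (1 + N * P) := by
  obtain ⟨B, rfl⟩ := CStarAlgebra.nonneg_iff_eq_star_mul_self.mp hP.nonneg
  rw [star_eq_conjTranspose, ← Matrix.mul_assoc, isUnit_one_add_mul_comm, ← Matrix.mul_assoc]
  exact (PosDef.one.add_posSemidef (hN.mul_mul_conjTranspose_same B)).isUnit

theorem PosSemidef.mul_inv_one_add_mul {P N : Matrix n n 𝕜} (hP : P.PosSemidef)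
    (hN : N.PosSemidef) : (P * (1 + N * P)⁻¹).PosSemidef := by
  obtain ⟨B, rfl⟩ := CStarAlgebra.nonneg_iff_eq_star_mul_self.mp hP.nonneg
  rw [star_eq_conjTranspose, ← Matrix.mul_assoc N, Matrix.mul_assoc, ← inv_one_add_mul_mul,
    ← Matrix.mul_assoc, ← Matrix.mul_assoc]
  exact (PosDef.one.add_posSemidef (hN.mul_mul_conjTranspose_same B)).inv.posSemidef
    |>.conjTranspose_mul_mul_same B

end RCLike

section Real
variable {m n : Type*}

theorem PosSemidef.transpose_eq {A : Matrix n n ℝ} (hA : A.PosSemidef) : Aᵀ = A := by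
  simpa using hA.isHermitian.eq

variable [Fintype m] [Fintype n]

theorem PosSemidef.mul_mul_transpose_same {A : Matrix n n ℝ} (hA : A.PosSemidef)
    (B : Matrix m n ℝ) : (B * A * Bᵀ).PosSemidef := by
  simpa using hA.mul_mul_conjTranspose_same B

theorem PosSemidef.transpose_mul_mul_same {A : Matrix n n ℝ} (hA : A.PosSemidef)
    (B : Matrix n m ℝ) : (Bᵀ * A * B).PosSemidef := by
  simpa using hA.conjTranspose_mul_mul_same B

variable [DecidableEq n]

theorem posSemidef_inv_transpose_mul_mul_inv {A Q : Matrix n n ℝ} (hQ : Q.PosSemidef) :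
    (Aᵀ⁻¹ * Q * A⁻¹).PosSemidef := by
  simpa only [transpose_nonsing_inv] using hQ.transpose_mul_mul_same A⁻¹

theorem isUnit_add_mul_inv_transpose_mul {A G Q : Matrix n n ℝ} (hA : IsUnit A)
    (hG : G.PosSemidef) (hQ : Q.PosSemidef) : IsUnit (A + G * Aᵀ⁻¹ * Q) := by
  rw [add_mul_inv_transpose_mul_eq hA]
  exact ((posSemidef_inv_transpose_mul_mul_inv hQ).isUnit_one_add_mul hG).mul hA

theorem posSemidef_inv_add_mul_inv_transpose_mul_mul {A G Q : Matrix n n ℝ} (hA : IsUnit A)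
    (hG : G.PosSemidef) (hQ : Q.PosSemidef) :
    ((A + G * Aᵀ⁻¹ * Q)⁻¹ * G * Aᵀ⁻¹).PosSemidef := by
  rw [add_mul_inv_transpose_mul_eq hA, Matrix.mul_inv_rev, Matrix.mul_assoc A⁻¹,
    inv_one_add_mul_mul]
  simpa only [transpose_nonsing_inv] using
    (hG.mul_inv_one_add_mul (posSemidef_inv_transpose_mul_mul_inv hQ)).mul_mul_transpose_same A⁻¹

variable {X Y : Matrix n n ℝ}

theorem posSemidef_mul_mul_inv_one_add_mul_mul_transpose (hX : X.PosSemidef)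
    (hY : Y.PosSemidef) (E : Matrix m n ℝ) : (E * Y * (1 + X * Y)⁻¹ * Eᵀ).PosSemidef := by
  simpa only [Matrix.mul_assoc] using (hY.mul_inv_one_add_mul hX).mul_mul_transpose_same E

theorem posSemidef_transpose_mul_inv_one_add_mul_mul_mul (hX : X.PosSemidef)
    (hY : Y.PosSemidef) (E : Matrix n m ℝ) : (Eᵀ * (1 + X * Y)⁻¹ * X * E).PosSemidef := by
  rw [Matrix.mul_assoc _ _ X, inv_one_add_mul_mul, ← Matrix.mul_assoc]
  simpa only [transpose_transpose] using
    posSemidef_mul_mul_inv_one_add_mul_mul_transpose hY hX Eᵀ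

end Real
end Matrix

namespace ADDA

section CommRing
variable {n R : Type*} [Fintype n] [DecidableEq n] [CommRing R]

noncomputable def cayley (M : Matrix n n R) (α : R) : Matrix n n R := (M + α • 1) * (M - α • 1)⁻¹

structure DoublingRelation (X Y M N E Xk Yk : Matrix n n R) : Prop where
  eq_mul : E = (1 + Yk * X) * M
  transpose_eq_mul : Eᵀ = (1 + Xk * Y) * N
  sub_fst : X - Xk = Eᵀ * X * M
  sub_snd : Y - Yk = E * Y * N

variable {X Y M N E Xk Yk : Matrix n n R}

theorem DoublingRelation.dual (h : DoublingRelation X Y M N E Xk Yk) :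
    DoublingRelation Y X N M Eᵀ Yk Xk where
  eq_mul := h.transpose_eq_mul
  transpose_eq_mul := by rw [transpose_transpose]; exact h.eq_mul
  sub_fst := by rw [transpose_transpose]; exact h.sub_snd
  sub_snd := h.sub_fst

theorem doubling_eq_mul (hu : IsUnit (1 + Yk * Xk)) (hE : E = (1 + Yk * X) * M)
    (hX : X - Xk = Eᵀ * X * M) :
    E * (1 + Yk * Xk)⁻¹ * E = (1 + (Yk + E * Yk * (1 + Xk * Yk)⁻¹ * Eᵀ) * X) * (M * M) := by
  have key : (1 + Yk * Xk)⁻¹ * (1 + Yk * X) = 1 + Yk * (1 + Xk * Yk)⁻¹ * (X - Xk) := by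
    rw [← inv_one_add_mul_mul, show 1 + Yk * X = 1 + Yk * Xk + Yk * (X - Xk) by noncomm_ring,
      Matrix.mul_add, nonsing_inv_mul _ ((isUnit_iff_isUnit_det _).1 hu), Matrix.mul_assoc]
  calc E * (1 + Yk * Xk)⁻¹ * E = E * ((1 + Yk * Xk)⁻¹ * (1 + Yk * X)) * M := by
        rw [hE]; simp only [Matrix.mul_assoc]
    _ = (1 + Yk * X) * M * M + E * Yk * (1 + Xk * Yk)⁻¹ * (Eᵀ * X * M) * M := by
        rw [key, ← hX, ← hE]; noncomm_ring
    _ = (1 + (Yk + E * Yk * (1 + Xk * Yk)⁻¹ * Eᵀ) * X) * (M * M) := by noncomm_ring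

theorem doubling_sub_snd (hu : IsUnit (1 + Yk * Xk)) (hE : Eᵀ = (1 + Xk * Y) * N)
    (hY : Y - Yk = E * Y * N) :
    Y - (Yk + E * Yk * (1 + Xk * Yk)⁻¹ * Eᵀ) = E * (1 + Yk * Xk)⁻¹ * E * Y * (N * N) := by
  have key : (1 + Yk * Xk)⁻¹ * (Y - Yk) = Y - Yk * (1 + Xk * Yk)⁻¹ * (1 + Xk * Y) := by
    rw [← inv_one_add_mul_mul, show Y - Yk = (1 + Yk * Xk) * Y - Yk * (1 + Xk * Y) by noncomm_ring,
      Matrix.mul_sub, ← Matrix.mul_assoc, nonsing_inv_mul _ ((isUnit_iff_isUnit_det _).1 hu),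
      Matrix.one_mul, Matrix.mul_assoc]
  calc Y - (Yk + E * Yk * (1 + Xk * Yk)⁻¹ * Eᵀ)
      = E * (Y - Yk * (1 + Xk * Yk)⁻¹ * (1 + Xk * Y)) * N := by
        rw [hE, sub_add_eq_sub_sub, hY]; noncomm_ring
    _ = E * (1 + Yk * Xk)⁻¹ * E * Y * (N * N) := by
        rw [← key, hY]; simp only [Matrix.mul_assoc]

theorem DoublingRelation.doubling (h : DoublingRelation X Y M N E Xk Yk) (hXk : Xkᵀ = Xk)
    (hYk : Ykᵀ = Yk) (hu : IsUnit (1 + Yk * Xk)) :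
    DoublingRelation X Y (M * M) (N * N) (E * (1 + Yk * Xk)⁻¹ * E)
      (Xk + Eᵀ * (1 + Xk * Yk)⁻¹ * Xk * E) (Yk + E * Yk * (1 + Xk * Yk)⁻¹ * Eᵀ) := by
  have hu' : IsUnit (1 + Xk * Yk) := (isUnit_one_add_mul_comm _ _).1 hu
  have hE' : (E * (1 + Yk * Xk)⁻¹ * E)ᵀ = Eᵀ * (1 + Xk * Yk)⁻¹ * Eᵀ := by
    simp only [transpose_mul, transpose_nonsing_inv, transpose_add, transpose_one, hXk, hYk,
      Matrix.mul_assoc]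
  have hXk' : Xk + Eᵀ * (1 + Xk * Yk)⁻¹ * Xk * E = Xk + Eᵀ * Xk * (1 + Yk * Xk)⁻¹ * Eᵀᵀ := by
    rw [transpose_transpose, Matrix.mul_assoc _ _ Xk, inv_one_add_mul_mul, ← Matrix.mul_assoc]
  exact
    { eq_mul := doubling_eq_mul hu h.eq_mul h.sub_fst
      transpose_eq_mul := by
        rw [hE', hXk']; exact doubling_eq_mul hu' h.dual.eq_mul h.dual.sub_fst
      sub_fst := by
        rw [hE', hXk']; exact doubling_sub_snd hu' h.dual.transpose_eq_mul h.dual.sub_snd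
      sub_snd := doubling_sub_snd hu h.transpose_eq_mul h.sub_snd }

variable {A G Q V : Matrix n n R} {α : R}

theorem init_eq_mul (hA : IsUnit (A - α • 1)) (hV : V = A - α • 1 + G * (A - α • 1)ᵀ⁻¹ * Q)
    (hVu : IsUnit V) (hRu : IsUnit (A - G * X - α • 1))
    (hCARE : Aᵀ * X + X * A + Q - X * G * X = 0) :
    1 + (2 * α) • V⁻¹ = (1 + (2 * α) • (V⁻¹ * G * (A - α • 1)ᵀ⁻¹) * X) * cayley (A - G * X) α := by
  have hK : G * (A - α • 1)ᵀ⁻¹ * (A - α • 1)ᵀ = G :=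
    nonsing_inv_mul_cancel_right _ _ ((isUnit_iff_isUnit_det _).1 ((isUnit_transpose _).2 hA))
  rw [Matrix.mul_assoc V⁻¹]
  generalize G * (A - α • 1)ᵀ⁻¹ = K at hK hV ⊢
  have expand : (V + (2 * α) • (K * X)) * (A - G * X + α • 1)
      = (V + (2 * α) • 1) * (A - G * X - α • 1)
        + (2 * α) • (K * (Aᵀ * X + X * A + Q - X * G * X))
        + (2 * α) • (G * X - K * (A - α • 1)ᵀ * X) := by
    rw [hV]
    simp only [transpose_sub, transpose_smul, transpose_one, add_mul, mul_add, sub_mul, mul_sub,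
      smul_add, smul_sub, smul_smul, smul_mul_assoc, mul_smul_comm, Matrix.mul_assoc,
      Matrix.mul_one, Matrix.one_mul]
    module
  rw [hCARE, hK, sub_self, Matrix.mul_zero, smul_zero, add_zero, add_zero] at expand
  have hVdet := (isUnit_iff_isUnit_det _).1 hVu
  refine hVu.mul_left_cancel (hRu.mul_right_cancel ?_)
  calc V * (1 + (2 * α) • V⁻¹) * (A - G * X - α • 1)
      = (V + (2 * α) • 1) * (A - G * X - α • 1) := by
        rw [Matrix.mul_add, Matrix.mul_one, mul_smul_comm, mul_nonsing_inv _ hVdet]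
    _ = (V + (2 * α) • (K * X)) * (A - G * X + α • 1) := expand.symm
    _ = V * ((1 + (2 * α) • (V⁻¹ * K) * X) * cayley (A - G * X) α) * (A - G * X - α • 1) := by
        have hVK : V * (1 + (2 * α) • (V⁻¹ * K) * X) = V + (2 * α) • (K * X) := by
          rw [Matrix.mul_add, Matrix.mul_one, smul_mul_assoc, mul_smul_comm, ← Matrix.mul_assoc,
            ← Matrix.mul_assoc, mul_nonsing_inv _ hVdet, Matrix.one_mul]
        rw [cayley, ← hVK]
        simp only [Matrix.mul_assoc, nonsing_inv_mul _ ((isUnit_iff_isUnit_det _).1 hRu),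
          Matrix.mul_one]

theorem init_sub_snd (hA : IsUnit (A - α • 1)) (hV : V = A - α • 1 + G * (A - α • 1)ᵀ⁻¹ * Q)
    (hVu : IsUnit V) (hSu : IsUnit (Aᵀ - Q * Y - α • 1))
    (hDUAL : A * Y + Y * Aᵀ - Y * Q * Y + G = 0) :
    Y - (2 * α) • (V⁻¹ * G * (A - α • 1)ᵀ⁻¹) = (1 + (2 * α) • V⁻¹) * Y * cayley (Aᵀ - Q * Y) α := by
  have hK : G * (A - α • 1)ᵀ⁻¹ * (A - α • 1)ᵀ = G :=
    nonsing_inv_mul_cancel_right _ _ ((isUnit_iff_isUnit_det _).1 ((isUnit_transpose _).2 hA))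
  rw [Matrix.mul_assoc V⁻¹]
  generalize G * (A - α • 1)ᵀ⁻¹ = K at hK hV ⊢
  have expand : (V + (2 * α) • 1) * Y * (Aᵀ - Q * Y + α • 1)
      = (V * Y - (2 * α) • K) * (Aᵀ - Q * Y - α • 1)
        + (2 * α) • (A * Y + Y * Aᵀ - Y * Q * Y + G)
        + (2 * α) • (K * (A - α • 1)ᵀ - G) := by
    rw [hV]
    simp only [transpose_sub, transpose_smul, transpose_one, add_mul, mul_add, sub_mul, mul_sub,
      smul_add, smul_sub, smul_smul, smul_mul_assoc, mul_smul_comm, Matrix.mul_assoc,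
      Matrix.mul_one, Matrix.one_mul]
    module
  rw [hDUAL, hK, sub_self, smul_zero, add_zero, add_zero] at expand
  have hVdet := (isUnit_iff_isUnit_det _).1 hVu
  refine hVu.mul_left_cancel (hSu.mul_right_cancel ?_)
  calc V * (Y - (2 * α) • (V⁻¹ * K)) * (Aᵀ - Q * Y - α • 1)
      = (V * Y - (2 * α) • K) * (Aᵀ - Q * Y - α • 1) := by
        rw [Matrix.mul_sub V, mul_smul_comm, ← Matrix.mul_assoc, mul_nonsing_inv _ hVdet,
          Matrix.one_mul]
    _ = (V + (2 * α) • 1) * Y * (Aᵀ - Q * Y + α • 1) := expand.symm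
    _ = V * ((1 + (2 * α) • V⁻¹) * Y * cayley (Aᵀ - Q * Y) α) * (Aᵀ - Q * Y - α • 1) := by
        have hV1 : V * (1 + (2 * α) • V⁻¹) = V + (2 * α) • 1 := by
          rw [Matrix.mul_add, Matrix.mul_one, mul_smul_comm, mul_nonsing_inv _ hVdet]
        rw [cayley, ← hV1]
        simp only [Matrix.mul_assoc, nonsing_inv_mul _ ((isUnit_iff_isUnit_det _).1 hSu),
          Matrix.mul_one]

theorem doublingRelation_init (hG : Gᵀ = G) (hQ : Qᵀ = Q) (hA : IsUnit (A - α • 1))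
    (hV : V = A - α • 1 + G * (A - α • 1)ᵀ⁻¹ * Q) (hVu : IsUnit V)
    (hRu : IsUnit (A - G * X - α • 1)) (hSu : IsUnit (Aᵀ - Q * Y - α • 1))
    (hCARE : Aᵀ * X + X * A + Q - X * G * X = 0) (hDUAL : A * Y + Y * Aᵀ - Y * Q * Y + G = 0) :
    DoublingRelation X Y (cayley (A - G * X) α) (cayley (Aᵀ - Q * Y) α) (1 + (2 * α) • V⁻¹)
      ((2 * α) • (Vᵀ⁻¹ * Q * (A - α • 1)⁻¹)) ((2 * α) • (V⁻¹ * G * (A - α • 1)ᵀ⁻¹)) := by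
  have hAt : (Aᵀ - α • 1)ᵀ = A - α • 1 := by
    rw [transpose_sub, transpose_transpose, transpose_smul, transpose_one]
  have hAtu : IsUnit (Aᵀ - α • 1) := by
    rw [← isUnit_transpose, hAt]; exact hA
  have hVt : Vᵀ = Aᵀ - α • 1 + Q * (Aᵀ - α • 1)ᵀ⁻¹ * G := by
    rw [hAt, hV]
    simp only [transpose_add, transpose_sub, transpose_mul, transpose_smul, transpose_one,
      transpose_nonsing_inv, transpose_transpose, hG, hQ, Matrix.mul_assoc]
  have hEt : (1 + (2 * α) • V⁻¹)ᵀ = 1 + (2 * α) • Vᵀ⁻¹ := by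
    rw [transpose_add, transpose_one, transpose_smul, transpose_nonsing_inv]
  have hCARE' : Aᵀᵀ * Y + Y * Aᵀ + G - Y * Q * Y = 0 := by
    rw [transpose_transpose, ← hDUAL]; abel
  have hDUAL' : Aᵀ * X + X * Aᵀᵀ - X * G * X + Q = 0 := by
    rw [transpose_transpose, ← hCARE]; abel
  have hRu' : IsUnit (Aᵀᵀ - G * X - α • 1) := by rwa [transpose_transpose]
  have hVtu : IsUnit Vᵀ := (isUnit_transpose _).2 hVu
  refine ⟨init_eq_mul hA hV hVu hRu hCARE, ?_, ?_, init_sub_snd hA hV hVu hSu hDUAL⟩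
  · rw [hEt, ← hAt]
    exact init_eq_mul hAtu hVt hVtu hSu hCARE'
  · have h := init_sub_snd hAtu hVt hVtu hRu' hDUAL'
    rwa [transpose_transpose, hAt, ← hEt] at h

end CommRing

section Real
variable {n : Type*} [Fintype n] [DecidableEq n] {X Y M N E Xk Yk : Matrix n n ℝ}

theorem DoublingRelation.iterate {Ahat Xs Ys : ℕ → Matrix n n ℝ}
    (h₀ : DoublingRelation X Y M N (Ahat 0) (Xs 0) (Ys 0))
    (hX₀ : (Xs 0).PosSemidef) (hY₀ : (Ys 0).PosSemidef)
    (hArec : ∀ k, Ahat (k + 1) = Ahat k * (1 + Ys k * Xs k)⁻¹ * Ahat k)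
    (hXrec : ∀ k, Xs (k + 1) = Xs k + (Ahat k)ᵀ * (1 + Xs k * Ys k)⁻¹ * Xs k * Ahat k)
    (hYrec : ∀ k, Ys (k + 1) = Ys k + Ahat k * Ys k * (1 + Xs k * Ys k)⁻¹ * (Ahat k)ᵀ) (k : ℕ) :
    (Xs k).PosSemidef ∧ (Ys k).PosSemidef ∧
      DoublingRelation X Y (M ^ 2 ^ k) (N ^ 2 ^ k) (Ahat k) (Xs k) (Ys k) := by
  induction k with
  | zero => simpa using ⟨hX₀, hY₀, h₀⟩
  | succ k ih =>
    obtain ⟨hXk, hYk, hk⟩ := ih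
    have hpow (M : Matrix n n ℝ) : M ^ 2 ^ (k + 1) = M ^ 2 ^ k * M ^ 2 ^ k := by
      rw [pow_succ, pow_mul, sq]
    rw [hArec, hXrec, hYrec, hpow, hpow]
    exact ⟨hXk.add (posSemidef_transpose_mul_inv_one_add_mul_mul_mul hXk hYk _),
      hYk.add (posSemidef_mul_mul_inv_one_add_mul_mul_transpose hXk hYk _),
      hk.doubling hXk.transpose_eq hYk.transpose_eq (hXk.isUnit_one_add_mul hYk)⟩

theorem DoublingRelation.posSemidef_sub_snd (h : DoublingRelation X Y M N E Xk Yk)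
    (hY : Y.PosSemidef) (hXk : Xk.PosSemidef) : (Y - Yk).PosSemidef := by
  have hN : N = (1 + Xk * Y)⁻¹ * Eᵀ := by
    rw [h.transpose_eq_mul, nonsing_inv_mul_cancel_left _ _
      ((isUnit_iff_isUnit_det _).1 (hY.isUnit_one_add_mul hXk))]
  rw [h.sub_snd, hN, ← Matrix.mul_assoc]
  exact posSemidef_mul_mul_inv_one_add_mul_mul_transpose hXk hY E

theorem DoublingRelation.posSemidef_bound (h : DoublingRelation X Y M N E Xk Yk)
    (hX : X.PosSemidef) (hY : Y.PosSemidef) (hYk : Yk.PosSemidef) :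
    ((1 + Y * X) * M * Y * N - (Y - Yk)).PosSemidef := by
  set W := 1 + Yk * X with hW
  have hWdet : IsUnit W.det := (isUnit_iff_isUnit_det _).1 (hX.isUnit_one_add_mul hYk)
  have hM : M = W⁻¹ * E := by rw [h.eq_mul, nonsing_inv_mul_cancel_left _ _ hWdet]
  have hEYN : E * (Y * N) = Y - Yk := by rw [h.sub_snd, Matrix.mul_assoc]
  have hD : (Y - Yk)ᵀ = Y - Yk := by rw [transpose_sub, hY.transpose_eq, hYk.transpose_eq]
  have expand : (1 + Y * X) * M * Y * N - (Y - Yk) = (Y - Yk) * (X * W⁻¹) * (Y - Yk)ᵀ := by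
    rw [hD, hM, show 1 + Y * X = W + (Y - Yk) * X by rw [hW]; noncomm_ring]
    simp only [Matrix.add_mul, Matrix.mul_assoc, mul_nonsing_inv_cancel_left _ _ hWdet, hEYN]
    abel
  rw [expand]
  exact (hX.mul_inv_one_add_mul hYk).mul_mul_transpose_same _

end Real

end ADDA

theorem stmt_8_general (n m p : ℕ)
    (A G Q : Matrix (Fin n) (Fin n) ℝ)
    (B : Matrix (Fin n) (Fin m) ℝ) (C : Matrix (Fin p) (Fin n) ℝ)
    (hG : G = B * Bᵀ) (hQ : Q = Cᵀ * C)
    (α : ℝ) (hα : 0 < α)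
    (Aα Uα Vα : Matrix (Fin n) (Fin n) ℝ)
    (hAα : Aα = A - α • 1)
    (hUα : Uα = Aαᵀ + Q * Aα⁻¹ * G)
    (hVα : Vα = Aα + G * (Aαᵀ)⁻¹ * Q)
    (hAαu : IsUnit Aα)
    (X Y : Matrix (Fin n) (Fin n) ℝ)
    (hXpsd : X.PosSemidef) (hYpsd : Y.PosSemidef)
    (hCARE : Aᵀ * X + X * A + Q - X * G * X = 0)
    (hDUAL : A * Y + Y * Aᵀ - Y * Q * Y + G = 0)
    (R S : Matrix (Fin n) (Fin n) ℝ)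
    (hR : R = A - G * X) (hS : S = Aᵀ - Q * Y)
    (hRu : IsUnit (R - α • 1)) (hSu : IsUnit (S - α • 1))
    (CR CS : Matrix (Fin n) (Fin n) ℝ)
    (hCR : CR = (R + α • 1) * (R - α • 1)⁻¹)
    (hCS : CS = (S + α • 1) * (S - α • 1)⁻¹)
    (Ahat Xs Ys : ℕ → Matrix (Fin n) (Fin n) ℝ)
    (hA0 : Ahat 0 = 1 + (2 * α) • Vα⁻¹)
    (hX0 : Xs 0 = (2 * α) • (Uα⁻¹ * Q * Aα⁻¹))
    (hY0 : Ys 0 = (2 * α) • (Aα⁻¹ * G * Uα⁻¹))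
    (hArec : ∀ k, Ahat (k + 1) = Ahat k * (1 + Ys k * Xs k)⁻¹ * Ahat k)
    (hXrec : ∀ k, Xs (k + 1) = Xs k + (Ahat k)ᵀ * (1 + Xs k * Ys k)⁻¹ * Xs k * Ahat k)
    (hYrec : ∀ k, Ys (k + 1) = Ys k + Ahat k * Ys k * (1 + Xs k * Ys k)⁻¹ * (Ahat k)ᵀ) :
    ∀ k, (Ys k).PosSemidef ∧ (Ys (k + 1) - Ys k).PosSemidef ∧
      (Y - Ys (k + 1)).PosSemidef ∧ (Y - Ys k).PosSemidef ∧
      ((1 + Y * X) * CR ^ (2 ^ k) * Y * CS ^ (2 ^ k) - (Y - Ys k)).PosSemidef := by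
  have hGpsd : G.PosSemidef := hG ▸ by simpa using posSemidef_self_mul_conjTranspose B
  have hQpsd : Q.PosSemidef := hQ ▸ by simpa using posSemidef_conjTranspose_mul_self C
  have hUV : Uα = Vαᵀ := by
    rw [hUα, hVα]
    simp only [transpose_add, transpose_mul, transpose_nonsing_inv, transpose_transpose,
      hGpsd.transpose_eq, hQpsd.transpose_eq, Matrix.mul_assoc]
  have hY0V : (Vα⁻¹ * G * Aαᵀ⁻¹).PosSemidef :=
    hVα ▸ posSemidef_inv_add_mul_inv_transpose_mul_mul hAαu hGpsd hQpsd
  have hX0U : (Uα⁻¹ * Q * Aα⁻¹).PosSemidef := by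
    simpa only [transpose_transpose, ← hUα] using
      posSemidef_inv_add_mul_inv_transpose_mul_mul ((isUnit_transpose _).2 hAαu) hQpsd hGpsd
  -- `Y₀` is symmetric, which turns `A_α⁻¹ G U_α⁻¹` into `V_α⁻¹ G A_α⁻ᵀ`.
  have hY0' : Ys 0 = (2 * α) • (Vα⁻¹ * G * Aαᵀ⁻¹) := by
    rw [hY0, ← hY0V.transpose_eq, hUV]
    simp only [transpose_mul, transpose_nonsing_inv, transpose_transpose, hGpsd.transpose_eq,
      Matrix.mul_assoc]
  have hinit : ADDA.DoublingRelation X Y CR CS (Ahat 0) (Xs 0) (Ys 0) := by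
    subst hAα hR hS
    rw [hA0, hX0, hY0', hUV, hCR, hCS]
    exact ADDA.doublingRelation_init hGpsd.transpose_eq hQpsd.transpose_eq hAαu hVα
      (hVα ▸ isUnit_add_mul_inv_transpose_mul hAαu hGpsd hQpsd) hRu hSu hCARE hDUAL
  have hiter := hinit.iterate (hX0 ▸ hX0U.smul (by positivity))
    (hY0' ▸ hY0V.smul (by positivity)) hArec hXrec hYrec
  intro k
  obtain ⟨hXk, hYk, hk⟩ := hiter k
  obtain ⟨hXk', -, hk'⟩ := hiter (k + 1)
  refine ⟨hYk, ?_, hk'.posSemidef_sub_snd hYpsd hXk', hk.posSemidef_sub_snd hYpsd hXk,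
    hk.posSemidef_bound hXpsd hYpsd hYk⟩
  rw [hYrec, add_sub_cancel_left]
  exact posSemidef_mul_mul_inv_one_add_mul_mul_transpose hXk hYk _

theorem stmt_8 (n m p : ℕ)
    (A G Q : Matrix (Fin n) (Fin n) ℝ)
    (B : Matrix (Fin n) (Fin m) ℝ) (C : Matrix (Fin p) (Fin n) ℝ)
    (hG : G = B * Bᵀ) (hQ : Q = Cᵀ * C)
    (α : ℝ) (hα : 0 < α)
    (Aα Uα Vα : Matrix (Fin n) (Fin n) ℝ)
    (hAα : Aα = A - α • 1)
    (hUα : Uα = Aαᵀ + Q * Aα⁻¹ * G)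
    (hVα : Vα = Aα + G * (Aαᵀ)⁻¹ * Q)
    (hAαu : IsUnit Aα) (hUαu : IsUnit Uα) (hVαu : IsUnit Vα)
    (X Y : Matrix (Fin n) (Fin n) ℝ)
    (hXpsd : X.PosSemidef) (hYpsd : Y.PosSemidef)
    (hCARE : Aᵀ * X + X * A + Q - X * G * X = 0)
    (hDUAL : A * Y + Y * Aᵀ - Y * Q * Y + G = 0)
    (R S : Matrix (Fin n) (Fin n) ℝ)
    (hR : R = A - G * X) (hS : S = Aᵀ - Q * Y)
    (hRu : IsUnit (R - α • 1)) (hSu : IsUnit (S - α • 1))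
    (CR CS : Matrix (Fin n) (Fin n) ℝ)
    (hCR : CR = (R + α • 1) * (R - α • 1)⁻¹)
    (hCS : CS = (S + α • 1) * (S - α • 1)⁻¹)
    (Ahat Xs Ys : ℕ → Matrix (Fin n) (Fin n) ℝ)
    (hA0 : Ahat 0 = 1 + (2 * α) • Vα⁻¹)
    (hX0 : Xs 0 = (2 * α) • (Uα⁻¹ * Q * Aα⁻¹))
    (hY0 : Ys 0 = (2 * α) • (Aα⁻¹ * G * Uα⁻¹))
    (hu1 : ∀ k, IsUnit (1 + Ys k * Xs k))
    (hu2 : ∀ k, IsUnit (1 + Xs k * Ys k))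
    (hArec : ∀ k, Ahat (k + 1) = Ahat k * (1 + Ys k * Xs k)⁻¹ * Ahat k)
    (hXrec : ∀ k, Xs (k + 1) = Xs k + (Ahat k)ᵀ * (1 + Xs k * Ys k)⁻¹ * Xs k * Ahat k)
    (hYrec : ∀ k, Ys (k + 1) = Ys k + Ahat k * Ys k * (1 + Xs k * Ys k)⁻¹ * (Ahat k)ᵀ) :
    ∀ k, (Ys k).PosSemidef ∧ (Ys (k + 1) - Ys k).PosSemidef ∧
      (Y - Ys (k + 1)).PosSemidef ∧ (Y - Ys k).PosSemidef ∧
      ((1 + Y * X) * CR ^ (2 ^ k) * Y * CS ^ (2 ^ k) - (Y - Ys k)).PosSemidef :=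
  stmt_8_general n m p A G Q B C hG hQ α hα Aα Uα Vα hAα hUα hVα hAαu X Y hXpsd hYpsd hCARE hDUAL R
    S hR hS hRu hSu CR CS hCR hCS Ahat Xs Ys hA0 hX0 hY0 hArec hXrec hYrec
end

section
/- Under the ADDA setup, for every k ≥ 0 one has ‖X − X_k‖₂ ≤ (‖X‖₂ + ‖X‖₂²‖Y‖₂)·‖𝒞(S;α)^{2^k}‖₂·‖𝒞(R;α)^{2^k}‖₂, and if the spectral radius ρ(𝒞(R;α)) < 1 and ρ(𝒞(S;α)) < 1 then ‖X − X_k‖₂ → 0 as k → ∞. -/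
/-!
The doubling iteration squares the Cayley transforms at each step. By induction on `k`,
`Â_k = (I + Y_k X) 𝒞(R)^(2^k)` and `X - X_k = Â_kᵀ X 𝒞(R)^(2^k)`, together with the dual
relations obtained by exchanging `X ↔ Y`, `Â_k ↔ Â_kᵀ` and `R ↔ S`. For `k = 0` they are
rearrangements of the Riccati equations, and the induction step uses the push-through identity
`(I + a b)⁻¹ a = a (I + b a)⁻¹`. The iterates `X_k`, `Y_k` stay positive semidefinite, so
`X - X_k = 𝒞(R)^(2^k)ᵀ (X + X Y_k X) 𝒞(R)^(2^k) ≥ 0`. Hence `‖X_k‖ ≤ ‖X‖`, and the bound follows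
from `X - X_k = (I + X_k Y) 𝒞(S)^(2^k) X 𝒞(R)^(2^k)`. The convergence statement follows from
Gelfand's formula.
-/

open Filter Topology
open scoped NNReal ENNReal

theorem tendsto_pow_atTop_nhds_zero_of_spectralRadius_lt_one {A : Type*} [NormedRing A]
    [NormedAlgebra ℂ A] [CompleteSpace A] {a : A} (h : spectralRadius ℂ a < 1) :
    Tendsto (fun k : ℕ => a ^ k) atTop (𝓝 0) := by
  obtain ⟨r, hr, hr1⟩ := ENNReal.lt_iff_exists_nnreal_btwn.mp h
  have hroot : ∀ᶠ k : ℕ in atTop, (‖a ^ k‖₊ : ℝ≥0∞) ^ (1 / k : ℝ) < r :=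
    (spectrum.pow_nnnorm_pow_one_div_tendsto_nhds_spectralRadius a).eventually_lt_const hr
  have hgeom : ∀ᶠ k : ℕ in atTop, ‖a ^ k‖ ≤ (r : ℝ) ^ k := by
    filter_upwards [hroot, eventually_gt_atTop 0] with k hk hk0
    rw [one_div, ENNReal.rpow_inv_lt_iff (by positivity), ENNReal.rpow_natCast] at hk
    exact_mod_cast hk.le
  refine squeeze_zero_norm' hgeom (tendsto_pow_atTop_nhds_zero_of_lt_one r.2 ?_)
  exact_mod_cast hr1

namespace Matrix

open scoped Matrix.Norms.L2Operator

theorem PosSemidef.transpose_eq_s10 {n : Type*} {x : Matrix n n ℝ} (hx : x.PosSemidef) : xᵀ = x :=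
  (isHermitian_iff_isSymm.mp hx.isHermitian).eq

variable {m n K : Type*} [Fintype m] [Fintype n] [DecidableEq m] [DecidableEq n] [CommRing K]

/-- When `1 + a * b` is singular, so is `1 + b * a`, and both sides are the junk value `0`. -/
theorem inv_one_add_mul_mul_comm (a : Matrix m n K) (b : Matrix n m K) :
    (1 + a * b)⁻¹ * a = a * (1 + b * a)⁻¹ := by
  by_cases h : IsUnit (1 + a * b).det
  · have h' : IsUnit (1 + b * a).det := det_one_add_mul_comm a b ▸ h
    have hcomm : (1 + a * b) * a = a * (1 + b * a) := by
      rw [Matrix.add_mul, Matrix.mul_add, Matrix.one_mul, Matrix.mul_one, Matrix.mul_assoc]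
    calc (1 + a * b)⁻¹ * a = (1 + a * b)⁻¹ * (a * (1 + b * a) * (1 + b * a)⁻¹) := by
          rw [mul_nonsing_inv_cancel_right _ _ h']
      _ = a * (1 + b * a)⁻¹ := by
          rw [← hcomm, Matrix.mul_assoc, nonsing_inv_mul_cancel_left _ _ h]
  · rw [nonsing_inv_apply_not_isUnit _ h,
      nonsing_inv_apply_not_isUnit _ (det_one_add_mul_comm a b ▸ h), Matrix.zero_mul,
      Matrix.mul_zero]

theorem PosSemidef.inv_one_add_mul_mul [PartialOrder K] [StarRing K] [StarOrderedRing K]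
    {a b : Matrix n n K} (ha : a.PosSemidef) (hb : b.PosSemidef) :
    ((1 + b * a)⁻¹ * b).PosSemidef := by
  by_cases h : IsUnit (1 + a * b).det
  · set N := (1 + a * b)⁻¹
    have hN : Nᴴ = (1 + b * a)⁻¹ := by
      rw [conjTranspose_nonsing_inv, conjTranspose_add, conjTranspose_one, conjTranspose_mul,
        ha.isHermitian.eq, hb.isHermitian.eq]
    have hfactor : (1 + b * a)⁻¹ * b = Nᴴ * (b + bᴴ * a * b) * N := by
      rw [hN, hb.isHermitian.eq, show b + b * a * b = b * (1 + a * b) by noncomm_ring,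
        ← mul_assoc, mul_assoc _ _ N, mul_nonsing_inv _ h, mul_one]
    rw [hfactor]
    exact (hb.add (ha.conjTranspose_mul_mul_same b)).conjTranspose_mul_mul_same N
  · rw [nonsing_inv_apply_not_isUnit _ (det_one_add_mul_comm a b ▸ h), zero_mul]
    exact PosSemidef.zero

theorem l2_opNorm_le_of_posSemidef_sub {A B : Matrix n n ℝ} (hA : A.PosSemidef)
    (hBA : (B - A).PosSemidef) : ‖A‖ ≤ ‖B‖ := by
  have quad (M : Matrix n n ℝ) (x : EuclideanSpace ℝ n) :
      (toEuclideanCLM (𝕜 := ℝ) M).reApplyInnerSelf x = x ⬝ᵥ M *ᵥ x := by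
    rw [ContinuousLinearMap.reApplyInnerSelf_apply, RCLike.re_to_real, real_inner_comm,
      inner_toEuclideanCLM]
  have hsymm : (toEuclideanCLM (𝕜 := ℝ) A).IsSymmetric :=
    (hA.isHermitian.isSelfAdjoint.map _).isSymmetric
  rw [← l2_opNorm_toEuclideanCLM, ContinuousLinearMap.norm_eq_iSup_rayleighQuotient _ hsymm]
  refine ciSup_le fun x => ?_
  have h0 : 0 ≤ x ⬝ᵥ A *ᵥ x := by simpa using hA.dotProduct_mulVec_nonneg x
  have h1 : x ⬝ᵥ A *ᵥ x ≤ x ⬝ᵥ B *ᵥ x := by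
    simpa [sub_mulVec, dotProduct_sub] using hBA.dotProduct_mulVec_nonneg x
  calc |(toEuclideanCLM (𝕜 := ℝ) A).rayleighQuotient x|
      = (toEuclideanCLM (𝕜 := ℝ) A).rayleighQuotient x := by
        rw [ContinuousLinearMap.rayleighQuotient, quad]; exact abs_of_nonneg (by positivity)
    _ ≤ (toEuclideanCLM (𝕜 := ℝ) B).rayleighQuotient x := by
        rw [ContinuousLinearMap.rayleighQuotient, ContinuousLinearMap.rayleighQuotient, quad, quad]
        gcongr
    _ ≤ ‖B‖ := (le_abs_self _).trans ((toEuclideanCLM (𝕜 := ℝ) B).rayleighQuotient_le_norm x)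

theorem tendsto_pow_atTop_nhds_zero_of_spectralRadius_map_lt_one {M : Matrix n n ℝ}
    (h : spectralRadius ℂ (M.map (algebraMap ℝ ℂ)) < 1) :
    Tendsto (fun k : ℕ => M ^ k) atTop (𝓝 0) := by
  have hre : Continuous fun N : Matrix n n ℂ => N.map Complex.re :=
    continuous_id.matrix_map Complex.continuous_re
  have hpow (k : ℕ) : M ^ k = ((M.map (algebraMap ℝ ℂ)) ^ k).map Complex.re := by
    rw [← (algebraMap ℝ ℂ).mapMatrix_apply, ← map_pow, RingHom.mapMatrix_apply, map_map]
    ext; simp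
  simp_rw [hpow]
  have := (hre.tendsto 0).comp (tendsto_pow_atTop_nhds_zero_of_spectralRadius_lt_one h)
  rwa [Matrix.map_zero _ Complex.zero_re] at this

/-- In the doubling iteration `W` is a Riccati solution, `P` a power `𝒞^(2^k)` of its Cayley
transform, `E = Â_k`, and `a`, `b` are the iterates approximating the dual solution and `W`. -/
structure DoublingRel (W P E a b : Matrix n n K) : Prop where
  eq_mul : E = (1 + a * W) * P
  sub_eq : W - b = Eᵀ * W * P

theorem DoublingRel.double {W P E a b : Matrix n n K} (h : DoublingRel W P E a b)
    (ha : aᵀ = a) (hb : bᵀ = b) (hab : IsUnit (1 + a * b)) (hba : IsUnit (1 + b * a)) :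
    DoublingRel W (P * P) (E * (1 + a * b)⁻¹ * E) (a + E * (1 + a * b)⁻¹ * a * Eᵀ)
      (b + Eᵀ * (1 + b * a)⁻¹ * b * E) := by
  rw [isUnit_iff_isUnit_det] at hab hba
  constructor
  · have hfactor : (1 + a * b)⁻¹ * (1 + a * W) = 1 + (1 + a * b)⁻¹ * a * (Eᵀ * W * P) := by
      rw [← h.sub_eq, show 1 + a * W = (1 + a * b) + a * (W - b) by noncomm_ring,
        Matrix.mul_add, nonsing_inv_mul _ hab, Matrix.mul_assoc]
    calc E * (1 + a * b)⁻¹ * E = E * ((1 + a * b)⁻¹ * (1 + a * W)) * P := by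
          nth_rw 2 [h.eq_mul]; noncomm_ring
      _ = E * P + E * (1 + a * b)⁻¹ * a * Eᵀ * W * (P * P) := by
          rw [hfactor]; noncomm_ring
      _ = (1 + (a + E * (1 + a * b)⁻¹ * a * Eᵀ) * W) * (P * P) := by
          nth_rw 1 [h.eq_mul]; noncomm_ring
  · have htranspose : (E * (1 + a * b)⁻¹ * E)ᵀ = Eᵀ * (1 + b * a)⁻¹ * Eᵀ := by
      rw [transpose_mul, transpose_mul, transpose_nonsing_inv, transpose_add, transpose_one,
        transpose_mul, ha, hb, Matrix.mul_assoc]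
    have hresidual : (1 + b * a) * (W * P) - b * E = (W - b) * P := by
      rw [h.eq_mul]; noncomm_ring
    calc W - (b + Eᵀ * (1 + b * a)⁻¹ * b * E)
        = Eᵀ * (1 + b * a)⁻¹ * ((1 + b * a) * (W * P)) - Eᵀ * (1 + b * a)⁻¹ * b * E := by
          rw [Matrix.mul_assoc Eᵀ _ ((1 + b * a) * _), nonsing_inv_mul_cancel_left _ _ hba,
            ← Matrix.mul_assoc, ← h.sub_eq]
          noncomm_ring
      _ = Eᵀ * (1 + b * a)⁻¹ * ((1 + b * a) * (W * P) - b * E) := by noncomm_ring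
      _ = (E * (1 + a * b)⁻¹ * E)ᵀ * W * (P * P) := by
          rw [hresidual, h.sub_eq, htranspose]; noncomm_ring

structure DoublingInvariant (X Y P P' E x y : Matrix n n ℝ) : Prop where
  posSemidef_x : x.PosSemidef
  posSemidef_y : y.PosSemidef
  rel_fst : DoublingRel X P E y x
  rel_snd : DoublingRel Y P' Eᵀ x y

theorem DoublingInvariant.step {X Y P P' E x y : Matrix n n ℝ}
    (h : DoublingInvariant X Y P P' E x y) (hyx : IsUnit (1 + y * x)) (hxy : IsUnit (1 + x * y)) :
    DoublingInvariant X Y (P * P) (P' * P') (E * (1 + y * x)⁻¹ * E)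
      (x + Eᵀ * (1 + x * y)⁻¹ * x * E) (y + E * y * (1 + x * y)⁻¹ * Eᵀ) := by
  have hx := h.posSemidef_x.transpose_eq_s10
  have hy := h.posSemidef_y.transpose_eq_s10
  have hy' : E * y * (1 + x * y)⁻¹ * Eᵀ = E * (1 + y * x)⁻¹ * y * Eᵀ := by
    rw [Matrix.mul_assoc E, ← inv_one_add_mul_mul_comm, ← Matrix.mul_assoc]
  have hE : Eᵀ * (1 + x * y)⁻¹ * Eᵀ = (E * (1 + y * x)⁻¹ * E)ᵀ := by
    rw [transpose_mul, transpose_mul, transpose_nonsing_inv, transpose_add, transpose_one,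
      transpose_mul, hx, hy, Matrix.mul_assoc]
  refine ⟨?_, ?_, ?_, ?_⟩
  · have hmid := (h.posSemidef_y.inv_one_add_mul_mul h.posSemidef_x).conjTranspose_mul_mul_same E
    rw [conjTranspose_eq_transpose_of_trivial, ← Matrix.mul_assoc] at hmid
    exact h.posSemidef_x.add hmid
  · have hmid := (h.posSemidef_x.inv_one_add_mul_mul h.posSemidef_y).mul_mul_conjTranspose_same E
    rw [conjTranspose_eq_transpose_of_trivial, ← Matrix.mul_assoc] at hmid
    rw [hy']
    exact h.posSemidef_y.add hmid
  · rw [hy']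
    exact h.rel_fst.double hy hx hyx hxy
  · have := h.rel_snd.double hx hy hxy hyx
    rw [transpose_transpose, hE] at this
    rwa [hy']

theorem DoublingInvariant.norm_sub_le {X Y P P' E x y : Matrix n n ℝ}
    (h : DoublingInvariant X Y P P' E x y) (hX : X.PosSemidef) :
    ‖X - x‖ ≤ (‖X‖ + ‖X‖ ^ 2 * ‖Y‖) * (‖P'‖ * ‖P‖) := by
  have hET : Eᵀ = Pᵀ * (1 + X * y) := by
    rw [h.rel_fst.eq_mul, transpose_mul, transpose_add, transpose_one, transpose_mul,
      hX.transpose_eq_s10, h.posSemidef_y.transpose_eq_s10]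
  have hcongr : X - x = Pᴴ * (X + Xᴴ * y * X) * P := by
    rw [h.rel_fst.sub_eq, hET, conjTranspose_eq_transpose_of_trivial,
      conjTranspose_eq_transpose_of_trivial, hX.transpose_eq_s10]
    noncomm_ring
  have hxX : ‖x‖ ≤ ‖X‖ := by
    refine l2_opNorm_le_of_posSemidef_sub h.posSemidef_x ?_
    rw [hcongr]
    exact (hX.add (h.posSemidef_y.conjTranspose_mul_mul_same X)).conjTranspose_mul_mul_same P
  have hfactor : X - x = P' * X * P + x * Y * (P' * X * P) := by
    rw [h.rel_fst.sub_eq, h.rel_snd.eq_mul]; noncomm_ring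
  have hPXP : ‖P' * X * P‖ ≤ ‖P'‖ * ‖X‖ * ‖P‖ := norm_mul₃_le
  calc ‖X - x‖ ≤ ‖P' * X * P‖ + ‖x‖ * ‖Y‖ * ‖P' * X * P‖ := by
        rw [hfactor]; exact (norm_add_le _ _).trans (add_le_add le_rfl norm_mul₃_le)
    _ ≤ ‖P'‖ * ‖X‖ * ‖P‖ + ‖X‖ * ‖Y‖ * (‖P'‖ * ‖X‖ * ‖P‖) := by gcongr
    _ = (‖X‖ + ‖X‖ ^ 2 * ‖Y‖) * (‖P'‖ * ‖P‖) := by ring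

theorem eq_mul_cayley {M N R : Matrix n n K} {α : K} (hR : IsUnit (R - α • 1))
    (h : M * (R - α • 1) = N * (R + α • 1)) : M = N * ((R + α • 1) * (R - α • 1)⁻¹) := by
  rw [← Matrix.mul_assoc, ← h,
    mul_nonsing_inv_cancel_right _ _ ((isUnit_iff_isUnit_det _).mp hR)]

section Initial

variable {A G Q X T U V R : Matrix n n K} {α : K}

theorem mul_add_smul_eq_of_care (hT : T = A - α • 1)
    (hCARE : Aᵀ * X + X * A + Q - X * G * X = 0) (hR : R = A - G * X) :
    X * (R + α • 1) = -(Tᵀ * X + Q) := by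
  rw [eq_neg_iff_add_eq_zero, ← hCARE, hR, hT, transpose_sub, transpose_smul, transpose_one]
  simp only [Matrix.mul_add, Matrix.mul_sub, Matrix.sub_mul, Matrix.mul_smul, Matrix.smul_mul,
    Matrix.mul_one, Matrix.one_mul, Matrix.mul_assoc]
  abel

theorem one_add_smul_inv_eq_of_care (hT : T = A - α • 1) (hTu : IsUnit T)
    (hV : V = T + G * Tᵀ⁻¹ * Q) (hVu : IsUnit V)
    (hCARE : Aᵀ * X + X * A + Q - X * G * X = 0) (hR : R = A - G * X)
    (hRu : IsUnit (R - α • 1)) :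
    1 + (2 * α) • V⁻¹ = (1 + (2 * α) • (V⁻¹ * G * Tᵀ⁻¹) * X) * ((R + α • 1) * (R - α • 1)⁻¹) := by
  have hTu' : IsUnit Tᵀ.det := by rwa [det_transpose, ← isUnit_iff_isUnit_det]
  have hkey : V⁻¹ * (R - α • 1) = 1 + V⁻¹ * G * Tᵀ⁻¹ * (X * (R + α • 1)) := by
    have hGX : G * X = G * Tᵀ⁻¹ * (Tᵀ * X) := by
      rw [Matrix.mul_assoc G, nonsing_inv_mul_cancel_left _ _ hTu']
    rw [mul_add_smul_eq_of_care hT hCARE hR, show R - α • 1 = T - G * X by rw [hR, hT]; abel]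
    calc V⁻¹ * (T - G * X)
        = V⁻¹ * (T + G * Tᵀ⁻¹ * Q) - V⁻¹ * G * Tᵀ⁻¹ * (Tᵀ * X + Q) := by rw [hGX]; noncomm_ring
      _ = 1 + V⁻¹ * G * Tᵀ⁻¹ * -(Tᵀ * X + Q) := by
          rw [← hV, nonsing_inv_mul _ ((isUnit_iff_isUnit_det _).mp hVu)]; noncomm_ring
  refine eq_mul_cayley hRu ?_
  simp only [Matrix.add_mul, Matrix.one_mul, smul_mul_assoc, hkey, Matrix.mul_assoc]
  module

theorem sub_smul_eq_of_care (hT : T = A - α • 1) (hTu : IsUnit T)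
    (hU : U = Tᵀ + Q * T⁻¹ * G) (hUu : IsUnit U)
    (hCARE : Aᵀ * X + X * A + Q - X * G * X = 0) (hR : R = A - G * X)
    (hRu : IsUnit (R - α • 1)) :
    X - (2 * α) • (U⁻¹ * Q * T⁻¹) = (1 + (2 * α) • U⁻¹) * X * ((R + α • 1) * (R - α • 1)⁻¹) := by
  have hkey : U⁻¹ * Q * T⁻¹ * (R - α • 1) = -(X + U⁻¹ * (X * (R + α • 1))) := by
    rw [mul_add_smul_eq_of_care hT hCARE hR, show R - α • 1 = T - G * X by rw [hR, hT]; abel]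
    calc U⁻¹ * Q * T⁻¹ * (T - G * X)
        = U⁻¹ * (Tᵀ * X + Q) - U⁻¹ * (Tᵀ + Q * T⁻¹ * G) * X := by
          rw [Matrix.mul_sub, nonsing_inv_mul_cancel_right _ _ ((isUnit_iff_isUnit_det _).mp hTu)]
          noncomm_ring
      _ = -(X + U⁻¹ * -(Tᵀ * X + Q)) := by
          rw [← hU, nonsing_inv_mul _ ((isUnit_iff_isUnit_det _).mp hUu)]; noncomm_ring
  refine eq_mul_cayley hRu ?_
  rw [Matrix.sub_mul, smul_mul_assoc, hkey, Matrix.add_mul, Matrix.add_mul, Matrix.one_mul,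
    smul_mul_assoc, smul_mul_assoc]
  simp only [Matrix.mul_sub, Matrix.mul_add, Matrix.mul_smul, Matrix.mul_one, Matrix.mul_assoc]
  module

end Initial

theorem posSemidef_initial_iterates {G Q T U : Matrix n n ℝ} (hG : G.PosSemidef)
    (hQ : Q.PosSemidef) (hTu : IsUnit T) (hU : U = Tᵀ + Q * T⁻¹ * G) :
    (U⁻¹ * Q * T⁻¹).PosSemidef ∧ (T⁻¹ * G * U⁻¹).PosSemidef := by
  set P := Tᵀ⁻¹ * Q * T⁻¹
  have hP : P.PosSemidef := by
    simpa only [conjTranspose_nonsing_inv, conjTranspose_eq_transpose_of_trivial,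
      transpose_nonsing_inv] using hQ.conjTranspose_mul_mul_same T⁻¹
  have hUinv : U⁻¹ = (1 + P * G)⁻¹ * Tᵀ⁻¹ := by
    have hTu' : IsUnit Tᵀ.det := by rwa [det_transpose, ← isUnit_iff_isUnit_det]
    rw [← mul_inv_rev, hU, Matrix.mul_add, Matrix.mul_one]
    simp only [P, Matrix.mul_assoc, mul_nonsing_inv_cancel_left _ _ hTu']
  constructor
  · rw [hUinv, show (1 + P * G)⁻¹ * Tᵀ⁻¹ * Q * T⁻¹ = (1 + P * G)⁻¹ * P by
      simp only [P, Matrix.mul_assoc]]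
    exact hG.inv_one_add_mul_mul hP
  · have := (hP.inv_one_add_mul_mul hG).mul_mul_conjTranspose_same T⁻¹
    rwa [conjTranspose_nonsing_inv, conjTranspose_eq_transpose_of_trivial,
      inv_one_add_mul_mul_comm, Matrix.mul_assoc, Matrix.mul_assoc G, ← hUinv,
      ← Matrix.mul_assoc] at this

theorem doublingInvariant_initial {A G Q X Y T U V R S : Matrix n n ℝ} {α : ℝ} (hα : 0 ≤ α)
    (hG : G.PosSemidef) (hQ : Q.PosSemidef)
    (hT : T = A - α • 1) (hTu : IsUnit T) (hU : U = Tᵀ + Q * T⁻¹ * G) (hUu : IsUnit U)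
    (hV : V = T + G * Tᵀ⁻¹ * Q) (hVu : IsUnit V)
    (hCARE : Aᵀ * X + X * A + Q - X * G * X = 0) (hDUAL : A * Y + Y * Aᵀ - Y * Q * Y + G = 0)
    (hR : R = A - G * X) (hS : S = Aᵀ - Q * Y)
    (hRu : IsUnit (R - α • 1)) (hSu : IsUnit (S - α • 1)) :
    DoublingInvariant X Y ((R + α • 1) * (R - α • 1)⁻¹) ((S + α • 1) * (S - α • 1)⁻¹)
      (1 + (2 * α) • V⁻¹) ((2 * α) • (U⁻¹ * Q * T⁻¹)) ((2 * α) • (T⁻¹ * G * U⁻¹)) := by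
  obtain ⟨hX₀, hY₀⟩ := posSemidef_initial_iterates hG hQ hTu hU
  have hVU : Vᵀ = U := by
    rw [hU, hV, transpose_add, transpose_mul, transpose_mul, transpose_nonsing_inv,
      transpose_transpose, hG.transpose_eq_s10, hQ.transpose_eq_s10, Matrix.mul_assoc]
  have hY₀' : V⁻¹ * G * Tᵀ⁻¹ = T⁻¹ * G * U⁻¹ := by
    rw [← hY₀.transpose_eq_s10, transpose_mul, transpose_mul, transpose_nonsing_inv,
      transpose_nonsing_inv, ← hVU, transpose_transpose, hG.transpose_eq_s10, Matrix.mul_assoc]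
  have hA₀ : (1 + (2 * α) • V⁻¹)ᵀ = 1 + (2 * α) • U⁻¹ := by
    rw [transpose_add, transpose_one, transpose_smul, transpose_nonsing_inv, hVU]
  -- The dual equation is the Riccati equation for `(Aᵀ, Q, G)`; its shifted matrix is `Tᵀ`.
  have hT' : Tᵀ = Aᵀ - α • 1 := by rw [hT, transpose_sub, transpose_smul, transpose_one]
  have hTu' : IsUnit Tᵀ := by
    rwa [isUnit_iff_isUnit_det, det_transpose, ← isUnit_iff_isUnit_det]
  have hU' : V = Tᵀᵀ + G * Tᵀ⁻¹ * Q := by rwa [transpose_transpose]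
  have hV' : U = Tᵀ + Q * Tᵀᵀ⁻¹ * G := by rwa [transpose_transpose]
  have hDUAL' : Aᵀᵀ * Y + Y * Aᵀ + G - Y * Q * Y = 0 := by
    rw [transpose_transpose, ← hDUAL]; abel
  refine ⟨hX₀.smul (by positivity), hY₀.smul (by positivity), ⟨?_, ?_⟩, ⟨?_, ?_⟩⟩
  · rw [← hY₀']
    exact one_add_smul_inv_eq_of_care hT hTu hV hVu hCARE hR hRu
  · rw [hA₀]
    exact sub_smul_eq_of_care hT hTu hU hUu hCARE hR hRu
  · rw [hA₀]
    simpa only [transpose_transpose] using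
      one_add_smul_inv_eq_of_care hT' hTu' hV' hUu hDUAL' hS hSu
  · rw [transpose_transpose, ← hY₀']
    exact sub_smul_eq_of_care hT' hTu' hU' hVu hDUAL' hS hSu

end Matrix

open Matrix
open scoped Matrix.Norms.L2Operator

theorem stmt_10_general (n m p : ℕ)
    (A G Q : Matrix (Fin n) (Fin n) ℝ)
    (B : Matrix (Fin n) (Fin m) ℝ) (C : Matrix (Fin p) (Fin n) ℝ)
    (hG : G = B * Bᵀ) (hQ : Q = Cᵀ * C)
    (α : ℝ) (hα : 0 < α)
    (Aα Uα Vα : Matrix (Fin n) (Fin n) ℝ)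
    (hAα : Aα = A - α • 1)
    (hUα : Uα = Aαᵀ + Q * Aα⁻¹ * G)
    (hVα : Vα = Aα + G * (Aαᵀ)⁻¹ * Q)
    (hAαu : IsUnit Aα) (hUαu : IsUnit Uα) (hVαu : IsUnit Vα)
    (X Y : Matrix (Fin n) (Fin n) ℝ)
    (hXpsd : X.PosSemidef)
    (hCARE : Aᵀ * X + X * A + Q - X * G * X = 0)
    (hDUAL : A * Y + Y * Aᵀ - Y * Q * Y + G = 0)
    (R S : Matrix (Fin n) (Fin n) ℝ)
    (hR : R = A - G * X) (hS : S = Aᵀ - Q * Y)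
    (hRu : IsUnit (R - α • 1)) (hSu : IsUnit (S - α • 1))
    (CR CS : Matrix (Fin n) (Fin n) ℝ)
    (hCR : CR = (R + α • 1) * (R - α • 1)⁻¹)
    (hCS : CS = (S + α • 1) * (S - α • 1)⁻¹)
    (Ahat Xs Ys : ℕ → Matrix (Fin n) (Fin n) ℝ)
    (hA0 : Ahat 0 = 1 + (2 * α) • Vα⁻¹)
    (hX0 : Xs 0 = (2 * α) • (Uα⁻¹ * Q * Aα⁻¹))
    (hY0 : Ys 0 = (2 * α) • (Aα⁻¹ * G * Uα⁻¹))
    (hu1 : ∀ k, IsUnit (1 + Ys k * Xs k))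
    (hu2 : ∀ k, IsUnit (1 + Xs k * Ys k))
    (hArec : ∀ k, Ahat (k + 1) = Ahat k * (1 + Ys k * Xs k)⁻¹ * Ahat k)
    (hXrec : ∀ k, Xs (k + 1) = Xs k + (Ahat k)ᵀ * (1 + Xs k * Ys k)⁻¹ * Xs k * Ahat k)
    (hYrec : ∀ k, Ys (k + 1) = Ys k + Ahat k * Ys k * (1 + Xs k * Ys k)⁻¹ * (Ahat k)ᵀ) :
    (∀ k, ‖X - Xs k‖ ≤ (‖X‖ + ‖X‖ ^ 2 * ‖Y‖) * (‖CS ^ (2 ^ k)‖ * ‖CR ^ (2 ^ k)‖)) ∧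
      (spectralRadius ℂ (CR.map (algebraMap ℝ ℂ)) < 1 →
        spectralRadius ℂ (CS.map (algebraMap ℝ ℂ)) < 1 →
        Tendsto (fun k => ‖X - Xs k‖) atTop (nhds 0)) := by
  have hGpsd : G.PosSemidef := by
    rw [hG, ← conjTranspose_eq_transpose_of_trivial]; exact posSemidef_self_mul_conjTranspose B
  have hQpsd : Q.PosSemidef := by
    rw [hQ, ← conjTranspose_eq_transpose_of_trivial]; exact posSemidef_conjTranspose_mul_self C
  have hinv (k : ℕ) :
      DoublingInvariant X Y (CR ^ 2 ^ k) (CS ^ 2 ^ k) (Ahat k) (Xs k) (Ys k) := by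
    induction k with
    | zero =>
      rw [pow_zero, pow_one, pow_one, hA0, hX0, hY0, hCR, hCS]
      exact doublingInvariant_initial hα.le hGpsd hQpsd hAα hAαu hUα hUαu hVα hVαu hCARE hDUAL
        hR hS hRu hSu
    | succ k ih =>
      rw [pow_succ, pow_mul, pow_mul, sq, sq, hArec, hXrec, hYrec]
      exact ih.step (hu1 k) (hu2 k)
  have hbound (k : ℕ) := (hinv k).norm_sub_le hXpsd
  refine ⟨hbound, fun hρR hρS => ?_⟩
  have hpow {M : Matrix (Fin n) (Fin n) ℝ}
      (h : spectralRadius ℂ (M.map (algebraMap ℝ ℂ)) < 1) :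
      Tendsto (fun k : ℕ => ‖M ^ 2 ^ k‖) atTop (nhds 0) := by
    simpa using ((tendsto_pow_atTop_nhds_zero_of_spectralRadius_map_lt_one h).comp
      (tendsto_pow_atTop_atTop_of_one_lt one_lt_two)).norm
  refine squeeze_zero (fun k => norm_nonneg _) hbound ?_
  simpa using ((hpow hρS).mul (hpow hρR)).const_mul (‖X‖ + ‖X‖ ^ 2 * ‖Y‖)

theorem stmt_10 (n m p : ℕ)
    (A G Q : Matrix (Fin n) (Fin n) ℝ)
    (B : Matrix (Fin n) (Fin m) ℝ) (C : Matrix (Fin p) (Fin n) ℝ)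
    (hG : G = B * Bᵀ) (hQ : Q = Cᵀ * C)
    (α : ℝ) (hα : 0 < α)
    (Aα Uα Vα : Matrix (Fin n) (Fin n) ℝ)
    (hAα : Aα = A - α • 1)
    (hUα : Uα = Aαᵀ + Q * Aα⁻¹ * G)
    (hVα : Vα = Aα + G * (Aαᵀ)⁻¹ * Q)
    (hAαu : IsUnit Aα) (hUαu : IsUnit Uα) (hVαu : IsUnit Vα)
    (X Y : Matrix (Fin n) (Fin n) ℝ)
    (hXpsd : X.PosSemidef) (hYpsd : Y.PosSemidef)
    (hCARE : Aᵀ * X + X * A + Q - X * G * X = 0)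
    (hDUAL : A * Y + Y * Aᵀ - Y * Q * Y + G = 0)
    (R S : Matrix (Fin n) (Fin n) ℝ)
    (hR : R = A - G * X) (hS : S = Aᵀ - Q * Y)
    (hRu : IsUnit (R - α • 1)) (hSu : IsUnit (S - α • 1))
    (CR CS : Matrix (Fin n) (Fin n) ℝ)
    (hCR : CR = (R + α • 1) * (R - α • 1)⁻¹)
    (hCS : CS = (S + α • 1) * (S - α • 1)⁻¹)
    (Ahat Xs Ys : ℕ → Matrix (Fin n) (Fin n) ℝ)
    (hA0 : Ahat 0 = 1 + (2 * α) • Vα⁻¹)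
    (hX0 : Xs 0 = (2 * α) • (Uα⁻¹ * Q * Aα⁻¹))
    (hY0 : Ys 0 = (2 * α) • (Aα⁻¹ * G * Uα⁻¹))
    (hu1 : ∀ k, IsUnit (1 + Ys k * Xs k))
    (hu2 : ∀ k, IsUnit (1 + Xs k * Ys k))
    (hArec : ∀ k, Ahat (k + 1) = Ahat k * (1 + Ys k * Xs k)⁻¹ * Ahat k)
    (hXrec : ∀ k, Xs (k + 1) = Xs k + (Ahat k)ᵀ * (1 + Xs k * Ys k)⁻¹ * Xs k * Ahat k)
    (hYrec : ∀ k, Ys (k + 1) = Ys k + Ahat k * Ys k * (1 + Xs k * Ys k)⁻¹ * (Ahat k)ᵀ) :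
    (∀ k, ‖X - Xs k‖ ≤ (‖X‖ + ‖X‖ ^ 2 * ‖Y‖) * (‖CS ^ (2 ^ k)‖ * ‖CR ^ (2 ^ k)‖)) ∧
      (spectralRadius ℂ (CR.map (algebraMap ℝ ℂ)) < 1 →
        spectralRadius ℂ (CS.map (algebraMap ℝ ℂ)) < 1 →
        Tendsto (fun k => ‖X - Xs k‖) atTop (nhds 0)) :=
  stmt_10_general n m p A G Q B C hG hQ α hα Aα Uα Vα hAα hUα hVα hAαu hUαu hVαu X Y hXpsd hCARE
    hDUAL R S hR hS hRu hSu CR CS hCR hCS Ahat Xs Ys hA0 hX0 hY0 hu1 hu2 hArec hXrec hYrec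
end
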